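/- For every k ≥ 1 and every z ∈ Z, the iterated commutator [z, x, (p^k−1)…, x] lies in L_k. (Lemma 5.1(i) of the paper, stated under the relations satisfied by the pro-p group 𝔊(p) for odd p.) -/

import Mathlib

/-!
Since `Z` commutes with `H ⊇ Z`, it is abelian, and the relation
`[z_{m,n}, x] = z_{m,n+1} z_{m+1,n+1} z_{m+1,n}` (from `x⁻¹ c_i x = c_i c_{i+1}`) shows that
`a ↦ [a, x]` is an endomorphism of `Z`. So `[·, x, (p^k−1)…, x]` is a homomorphism on `Z` and it
suffices to treat the generators. Applying the relation repeatedly along the diagonal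
`t ↦ [z_{m+t,n+t}, x, (p^k−1−t)…, x]` telescopes to
`[z_{m,n}, x, (p^k−1)…, x] = w_{m−1,n+1,k} · w_{m,n,k} · z_{m+p^k−1,n+p^k−1}`,
a product of generators of `L_k` when `m ≥ 2`; and `z_{1,n} = z_{n,1}⁻¹`.
-/

namespace Paper

variable {G : Type*} [Group G]

/-- The paper's commutator `[a,b] = a⁻¹ b⁻¹ a b`. -/
def pc {G : Type*} [Group G] (a b : G) : G := a⁻¹ * b⁻¹ * a * b

/-- The left-normed iterated commutator `[a, x, (r)…, x]`. -/
def itc {G : Type*} [Group G] (x a : G) : ℕ → G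
  | 0 => a
  | r + 1 => pc (itc x a r) x

/-- `c_i`, where `c_1 = y` and `c_{i+1} = [c_i, x]`; equivalently `c_i = [y, x, (i-1)…, x]`. -/
def cc (x y : G) (i : ℕ) : G := itc x y (i - 1)

/-- `z_{m,n} = [c_m, c_n]`. -/
def zz (x y : G) (m n : ℕ) : G := pc (cc x y m) (cc x y n)

/-- `H = ⟨c_i : i ≥ 1⟩`. -/
def Hsub (x y : G) : Subgroup G :=
  Subgroup.closure {g | ∃ i, 1 ≤ i ∧ g = cc x y i}

/-- `Z = ⟨z_{m,n} : m, n ≥ 1⟩` (odd-prime case). -/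
def ZsubP (x y : G) : Subgroup G :=
  Subgroup.closure {g | ∃ m n, 1 ≤ m ∧ 1 ≤ n ∧ g = zz x y m n}

/-- `w_{i,j,k} = ∏_{t=1}^{p^k−1} [z_{i+t,j+t−1}, x, (p^k−1−t)…, x]`,
factors in order of increasing `t` (reindexed by `t ↦ t+1`). -/
def wwP (p : ℕ) (x y : G) (i j k : ℕ) : G :=
  ((List.range (p ^ k - 1)).map
    (fun t => itc x (zz x y (i + t + 1) (j + t)) (p ^ k - 2 - t))).prod

/-- `d_k(h) = [h,x,(p^k−1)…,x]⁻¹ · x^{−p^k} · (xh)^{p^k}`. -/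
def ddP (p : ℕ) (x y : G) (k : ℕ) (h : G) : G :=
  (itc x h (p ^ k - 1))⁻¹ * (x ^ p ^ k)⁻¹ * (x * h) ^ p ^ k

/-- `L_k`, the normal closure of `{w_{i,j,k} : i,j ≥ 1} ∪ {d_k(y)} ∪ {z_{m,n} : m ≥ p^k, n ≥ 1}`. -/
def LsubP (p : ℕ) (x y : G) (k : ℕ) : Subgroup G :=
  Subgroup.normalClosure (({g | ∃ i j, 1 ≤ i ∧ 1 ≤ j ∧ g = wwP p x y i j k} ∪
      {ddP p x y k y}) ∪
    {g | ∃ m n, p ^ k ≤ m ∧ 1 ≤ n ∧ g = zz x y m n})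

/-- `Γ^{p^k} = ⟨g^{p^k} : g ∈ Γ⟩`. -/
def powSubP (G : Type*) [Group G] (p k : ℕ) : Subgroup G :=
  Subgroup.closure {g | ∃ a : G, g = a ^ p ^ k}

/-- `Θ̃_k = ⟨z_{m,n} : m ≥ p^k, n ≥ 1⟩`. -/
def ThetaT (p : ℕ) (x y : G) (k : ℕ) : Subgroup G :=
  Subgroup.closure {g | ∃ m n, p ^ k ≤ m ∧ 1 ≤ n ∧ g = zz x y m n}

/-- `[A, g] = ⟨[a,g] : a ∈ A⟩`. -/
def commSub (A : Subgroup G) (g : G) : Subgroup G :=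
  Subgroup.closure {c | ∃ a ∈ A, c = pc a g}

/-- The `r`-fold iterate `[A, g, (r)…, g]`. -/
def itcSub (A : Subgroup G) (g : G) : ℕ → Subgroup G
  | 0 => A
  | r + 1 => commSub (itcSub A g r) g

/-- `Λ̃_k`. -/
def LambdaT (p : ℕ) (x y : G) (k : ℕ) : Subgroup G :=
  Subgroup.closure {g | ∃ m n, g = itc (x ^ p ^ (k - 1)) (zz x y m n) (p - 1) ∧
    ((p ^ (k - 1) ≤ m ∧ m < p ^ k ∧
        max 1 (m - m / p ^ (k - 1) * p ^ (k - 1)) ≤ n ∧ n < p ^ (k - 1)) ∨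
      (∃ i, 2 ≤ i ∧ i ≤ p - 2 ∧ m = i * p ^ (k - 1) ∧ n = p ^ (k - 1)))}

/-- `w̃_{i,j,k} = ∏_{t=1}^{p^k−p^{k−1}} [z_{i+t,j+t−1}, x, (p^k−p^{k−1}−t)…, x]`,
factors in order of increasing `t` (reindexed by `t ↦ t+1`). -/
def wwT (p : ℕ) (x y : G) (i j k : ℕ) : G :=
  ((List.range (p ^ k - p ^ (k - 1))).map
    (fun t => itc x (zz x y (i + t + 1) (j + t)) (p ^ k - p ^ (k - 1) - 1 - t))).prod

/-- `d̃_k(h) = [h,x,(p^k−p^{k−1})…,x]⁻¹ · x^{−p^k} · (x^{p^{k−1}}h)^p`. -/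
def ddT (p : ℕ) (x y : G) (k : ℕ) (h : G) : G :=
  (itc x h (p ^ k - p ^ (k - 1)))⁻¹ * (x ^ p ^ k)⁻¹ * (x ^ p ^ (k - 1) * h) ^ p

/-- `L̃_k`, the normal closure of `{w̃_{i,j,k} : i,j ≥ p^{k−1}} ∪ {d̃_k(y)}`. -/
def LsubT (p : ℕ) (x y : G) (k : ℕ) : Subgroup G :=
  Subgroup.normalClosure
    ({g | ∃ i j, p ^ (k - 1) ≤ i ∧ p ^ (k - 1) ≤ j ∧ g = wwT p x y i j k} ∪
      {ddT p x y k y})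

/-- `Γ_{(k)} = ⟨c_j (j ≥ p^{k−1}), z_{m,n} (m > n ≥ 1, m + n ≥ p^{k−1})⟩`. -/
def GammaK (p : ℕ) (x y : G) (k : ℕ) : Subgroup G :=
  Subgroup.closure ({g | ∃ j, p ^ (k - 1) ≤ j ∧ g = cc x y j} ∪
    {g | ∃ m n, 1 ≤ n ∧ n < m ∧ p ^ (k - 1) ≤ m + n ∧ g = zz x y m n})


open Finset
open scoped IsMulCommutative

theorem pc_one_left (x : G) : pc 1 x = 1 := by simp [pc]

theorem pc_self (a : G) : pc a a = 1 := by simp [pc]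

theorem inv_pc (a b : G) : (pc a b)⁻¹ = pc b a := by simp only [pc]; group

theorem pc_mem {K : Subgroup G} {a b : G} (ha : a ∈ K) (hb : b ∈ K) : pc a b ∈ K :=
  mul_mem (mul_mem (mul_mem (inv_mem ha) (inv_mem hb)) ha) hb

theorem pc_mul_left_of_commute {u v w : G} (h : Commute (pc u w) v) :
    pc (u * v) w = pc u w * pc v w := by
  calc pc (u * v) w = v⁻¹ * pc u w * v * pc v w := by simp only [pc]; group
    _ = pc u w * pc v w := by rw [mul_assoc v⁻¹, h.eq, inv_mul_cancel_left]

theorem pc_mul_right_of_commute {u v w : G} (h : Commute (pc u v) w) :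
    pc u (v * w) = pc u w * pc u v := by
  calc pc u (v * w) = pc u w * (w⁻¹ * pc u v * w) := by simp only [pc]; group
    _ = pc u w * pc u v := by rw [mul_assoc w⁻¹, h.eq, inv_mul_cancel_left]

theorem pc_inv_left_of_commute {u w : G} (h : Commute (pc u w) u) :
    pc u⁻¹ w = (pc u w)⁻¹ := by
  calc pc u⁻¹ w = u * (pc u w)⁻¹ * u⁻¹ := by simp only [pc]; group
    _ = (pc u w)⁻¹ := by rw [← h.inv_left.eq, mul_inv_cancel_right]

/-- Since `x⁻¹ a x = a [a, x]`, conjugating `[a, b]` by `x` replaces `a, b` by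
`a [a, x], b [b, x]`. -/
theorem pc_pc_left (a b x : G) :
    pc (pc a b) x = (pc a b)⁻¹ * pc (a * pc a x) (b * pc b x) := by
  simp only [pc]; group

theorem itc_one (x : G) : ∀ r, itc x 1 r = 1
  | 0 => rfl
  | r + 1 => by rw [itc, itc_one x r, pc_one_left]

theorem itc_succ' (x : G) : ∀ (r : ℕ) (a : G), itc x a (r + 1) = itc x (pc a x) r
  | 0, _ => rfl
  | r + 1, a => by rw [itc, itc_succ' x r a]; rfl

section CommutatorEndomorphism

variable {x : G}

theorem pc_mem_closure {S : Set G} [IsMulCommutative (Subgroup.closure S)]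
    (hS : ∀ s ∈ S, pc s x ∈ Subgroup.closure S) {a : G} (ha : a ∈ Subgroup.closure S) :
    pc a x ∈ Subgroup.closure S := by
  induction ha using Subgroup.closure_induction with
  | mem s hs => exact hS s hs
  | one => simpa only [pc_one_left] using one_mem _
  | mul u v _ hv hu' hv' =>
    rw [pc_mul_left_of_commute (setLike_mul_comm hu' hv)]
    exact mul_mem hu' hv'
  | inv u hu hu' =>
    rw [pc_inv_left_of_commute (setLike_mul_comm hu' hu)]
    exact inv_mem hu'

def pcHom (A : Subgroup G) [IsMulCommutative A] (x : G) (hA : ∀ a ∈ A, pc a x ∈ A) :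
    A →* A where
  toFun a := ⟨pc a x, hA a a.2⟩
  map_one' := Subtype.ext (pc_one_left x)
  map_mul' a b := Subtype.ext (pc_mul_left_of_commute (setLike_mul_comm (hA a a.2) b.2))

variable {A : Subgroup G} [IsMulCommutative A]

theorem coe_pcHom_iterate (hA : ∀ a ∈ A, pc a x ∈ A) (r : ℕ) (a : A) :
    ((pcHom A x hA)^[r] a : G) = itc x a r := by
  induction r generalizing a with
  | zero => rfl
  | succ r ih => rw [Function.iterate_succ_apply, ih, itc_succ']; rfl

theorem itc_mul_of_mem (hA : ∀ a ∈ A, pc a x ∈ A) {a b : G} (ha : a ∈ A) (hb : b ∈ A)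
    (r : ℕ) :
    itc x (a * b) r = itc x a r * itc x b r := by
  have h := congrArg Subtype.val (iterate_map_mul (pcHom A x hA) r ⟨a, ha⟩ ⟨b, hb⟩)
  simpa only [Subgroup.coe_mul, coe_pcHom_iterate] using h

theorem itc_inv_of_mem (hA : ∀ a ∈ A, pc a x ∈ A) {a : G} (ha : a ∈ A) (r : ℕ) :
    itc x a⁻¹ r = (itc x a r)⁻¹ := by
  have h := congrArg Subtype.val (iterate_map_inv (pcHom A x hA) r ⟨a, ha⟩)
  simpa only [Subgroup.coe_inv, coe_pcHom_iterate] using h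

theorem coe_prod_range (g : ℕ → A) (s : ℕ) :
    ((∏ t ∈ range s, g t : A) : G) = ((List.range s).map fun t => (g t : G)).prod := by
  rw [← List.toFinset_range, List.prod_toFinset _ List.nodup_range, Subgroup.val_list_prod,
    List.map_map]
  rfl

end CommutatorEndomorphism

/-- Telescoping along the diagonal `t ↦ φ^[s - t] (f (i + t) (j + t))`. -/
theorem iterate_eq_prod_mul_prod_mul {M : Type*} [CommGroup M] (φ : M →* M)
    (f : ℕ → ℕ → M) {i j : ℕ}
    (hf : ∀ m ≥ i, ∀ n ≥ j, φ (f m n) = f m (n + 1) * f (m + 1) (n + 1) * f (m + 1) n)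
    (s : ℕ) :
    φ^[s] (f i j) = (∏ t ∈ range s, φ^[s - 1 - t] (f (i + t) (j + t + 1))) *
      (∏ t ∈ range s, φ^[s - 1 - t] (f (i + t + 1) (j + t))) * f (i + s) (j + s) := by
  set a : ℕ → M := fun t => φ^[s - t] (f (i + t) (j + t))
  have step : ∀ t ∈ range s, a t / a (t + 1) =
      φ^[s - 1 - t] (f (i + t) (j + t + 1)) * φ^[s - 1 - t] (f (i + t + 1) (j + t)) := by
    intro t ht
    have hst : s - t = s - 1 - t + 1 := by have := mem_range.1 ht; omega
    have hst' : s - (t + 1) = s - 1 - t := by omega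
    simp only [a, hst, hst', Function.iterate_succ_apply, ← add_assoc,
      hf (i + t) (by omega) (j + t) (by omega), iterate_map_mul]
    rw [mul_right_comm _ ((⇑φ)^[s - 1 - t] (f (i + t + 1) (j + t + 1))), mul_div_cancel_right]
  rw [← prod_mul_distrib, ← prod_congr rfl step, prod_range_div']
  simp [a]

section Relations

variable {x y : G}

theorem cc_succ {i : ℕ} (hi : 1 ≤ i) : cc x y (i + 1) = pc (cc x y i) x := by
  obtain ⟨i, rfl⟩ := Nat.exists_eq_add_of_le' hi
  rfl

/-- Truncated subtraction in `cc` makes `c₀ = c₁`. -/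
theorem cc_max_one (i : ℕ) : cc x y (max i 1) = cc x y i :=
  congrArg (itc x y) (by omega)

theorem cc_mem_Hsub (i : ℕ) : cc x y i ∈ Hsub x y :=
  cc_max_one (x := x) (y := y) i ▸ Subgroup.subset_closure ⟨max i 1, le_max_right i 1, rfl⟩

theorem zz_mem_ZsubP (m n : ℕ) : zz x y m n ∈ ZsubP x y := by
  refine Subgroup.subset_closure ⟨max m 1, max n 1, le_max_right m 1, le_max_right n 1, ?_⟩
  rw [zz, zz, cc_max_one, cc_max_one]

theorem zz_swap (m n : ℕ) : zz x y n m = (zz x y m n)⁻¹ := (inv_pc (cc x y m) (cc x y n)).symm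

theorem ZsubP_le_Hsub : ZsubP x y ≤ Hsub x y :=
  (Subgroup.closure_le _).2 fun _ ⟨m, n, _, _, h⟩ =>
    h ▸ pc_mem (cc_mem_Hsub m) (cc_mem_Hsub n)

theorem isMulCommutative_ZsubP
    (hca : ∀ z ∈ ZsubP x y, ∀ h ∈ Hsub x y, z * h = h * z) : IsMulCommutative (ZsubP x y) :=
  ⟨⟨fun a b => Subtype.ext (hca a a.2 b (ZsubP_le_Hsub b.2))⟩⟩

theorem pc_zz (hca : ∀ z ∈ ZsubP x y, ∀ h ∈ Hsub x y, z * h = h * z)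
    {m n : ℕ} (hm : 1 ≤ m) (hn : 1 ≤ n) :
    pc (zz x y m n) x = zz x y m (n + 1) * zz x y (m + 1) (n + 1) * zz x y (m + 1) n := by
  have comm : ∀ {z h : G}, z ∈ ZsubP x y → h ∈ Hsub x y → Commute z h :=
    fun hz hh => hca _ hz _ hh
  have hZ := zz_mem_ZsubP (x := x) (y := y)
  have hH := cc_mem_Hsub (x := x) (y := y)
  have h₁ : pc (cc x y m * cc x y (m + 1)) (cc x y n) = zz x y m n * zz x y (m + 1) n :=
    pc_mul_left_of_commute (comm (hZ m n) (hH (m + 1)))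
  have h₂ : pc (cc x y m * cc x y (m + 1)) (cc x y (n + 1)) =
      zz x y m (n + 1) * zz x y (m + 1) (n + 1) :=
    pc_mul_left_of_commute (comm (hZ m (n + 1)) (hH (m + 1)))
  calc pc (zz x y m n) x
      = (zz x y m n)⁻¹ * pc (cc x y m * cc x y (m + 1)) (cc x y n * cc x y (n + 1)) := by
        rw [zz, pc_pc_left, cc_succ hm, cc_succ hn]
    _ = (zz x y m n)⁻¹ *
          (zz x y m (n + 1) * zz x y (m + 1) (n + 1) * (zz x y m n * zz x y (m + 1) n)) := by
        rw [pc_mul_right_of_commute (h₁ ▸ comm (mul_mem (hZ m n) (hZ (m + 1) n)) (hH (n + 1))),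
          h₁, h₂]
    _ = zz x y m (n + 1) * zz x y (m + 1) (n + 1) * zz x y (m + 1) n := by
        rw [(comm (mul_mem (hZ m (n + 1)) (hZ (m + 1) (n + 1))) (ZsubP_le_Hsub (hZ m n))).left_comm,
          inv_mul_cancel_left]

theorem pc_mem_ZsubP (hca : ∀ z ∈ ZsubP x y, ∀ h ∈ Hsub x y, z * h = h * z) {z : G}
    (hz : z ∈ ZsubP x y) : pc z x ∈ ZsubP x y := by
  have : IsMulCommutative (Subgroup.closure _) := isMulCommutative_ZsubP hca
  refine pc_mem_closure ?_ hz
  rintro _ ⟨m, n, hm, hn, rfl⟩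
  rw [pc_zz hca hm hn]
  exact mul_mem (mul_mem (zz_mem_ZsubP _ _) (zz_mem_ZsubP _ _)) (zz_mem_ZsubP _ _)

theorem itc_zz_eq_wwP_mul_wwP_mul_zz (hca : ∀ z ∈ ZsubP x y, ∀ h ∈ Hsub x y, z * h = h * z)
    (p k : ℕ) {m n : ℕ} (hm : 2 ≤ m) (hn : 1 ≤ n) :
    itc x (zz x y m n) (p ^ k - 1) = wwP p x y (m - 1) (n + 1) k * wwP p x y m n k *
      zz x y (m + (p ^ k - 1)) (n + (p ^ k - 1)) := by
  have := isMulCommutative_ZsubP hca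
  set T := pcHom (ZsubP x y) x fun _ => pc_mem_ZsubP hca
  set f : ℕ → ℕ → ZsubP x y := fun i j => ⟨zz x y i j, zz_mem_ZsubP i j⟩
  have hT : ∀ i ≥ m, ∀ j ≥ n, T (f i j) = f i (j + 1) * f (i + 1) (j + 1) * f (i + 1) j :=
    fun _ hi _ hj => Subtype.ext (pc_zz hca (by omega) (by omega))
  have hw : ∀ i j, ((∏ t ∈ range (p ^ k - 1), T^[p ^ k - 1 - 1 - t] (f (i + t + 1) (j + t)) :
      ZsubP x y) : G) = wwP p x y i j k := by
    intro i j
    rw [coe_prod_range, wwP]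
    refine congrArg List.prod (List.map_congr_left fun t _ => ?_)
    rw [coe_pcHom_iterate, show p ^ k - 1 - 1 - t = p ^ k - 2 - t by omega]
  have hm' : ∀ t, m - 1 + t + 1 = m + t := fun t => by omega
  calc itc x (zz x y m n) (p ^ k - 1) = T^[p ^ k - 1] (f m n) :=
      (coe_pcHom_iterate _ (p ^ k - 1) (f m n)).symm
    _ = _ := by
      rw [iterate_eq_prod_mul_prod_mul T f hT, ← hw, ← hw]
      simp only [hm', add_right_comm n 1, Subgroup.coe_mul]
      rfl

end Relations

section Membership

variable {p : ℕ} {x y : G} {k : ℕ}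

theorem wwP_mem_LsubP {i j : ℕ} (hi : 1 ≤ i) (hj : 1 ≤ j) :
    wwP p x y i j k ∈ LsubP p x y k :=
  Subgroup.subset_normalClosure (Or.inl (Or.inl ⟨i, j, hi, hj, rfl⟩))

theorem zz_mem_LsubP {m n : ℕ} (hm : p ^ k ≤ m) (hn : 1 ≤ n) : zz x y m n ∈ LsubP p x y k :=
  Subgroup.subset_normalClosure (Or.inr ⟨m, n, hm, hn, rfl⟩)

theorem itc_zz_mem_LsubP_of_two_le (hca : ∀ z ∈ ZsubP x y, ∀ h ∈ Hsub x y, z * h = h * z)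
    {m n : ℕ} (hm : 2 ≤ m) (hn : 1 ≤ n) :
    itc x (zz x y m n) (p ^ k - 1) ∈ LsubP p x y k := by
  rw [itc_zz_eq_wwP_mul_wwP_mul_zz hca p k hm hn]
  exact mul_mem (mul_mem (wwP_mem_LsubP (by omega) (by omega)) (wwP_mem_LsubP (by omega) hn))
    (zz_mem_LsubP (by omega) (by omega))

theorem itc_zz_mem_LsubP (hca : ∀ z ∈ ZsubP x y, ∀ h ∈ Hsub x y, z * h = h * z)
    {m n : ℕ} (hm : 1 ≤ m) (hn : 1 ≤ n) :
    itc x (zz x y m n) (p ^ k - 1) ∈ LsubP p x y k := by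
  have := isMulCommutative_ZsubP hca
  obtain rfl | hm := hm.eq_or_lt
  · obtain rfl | hn := hn.eq_or_lt
    · rw [zz, pc_self, itc_one]
      exact one_mem _
    · rw [zz_swap, itc_inv_of_mem (fun _ => pc_mem_ZsubP hca) (zz_mem_ZsubP n 1)]
      exact inv_mem (itc_zz_mem_LsubP_of_two_le hca hn le_rfl)
  · exact itc_zz_mem_LsubP_of_two_le hca hm hn

end Membership

theorem lemma_Lk_odd_i_general (p : ℕ) (x y : G)
    (hca : ∀ z ∈ ZsubP x y, ∀ h ∈ Hsub x y, z * h = h * z)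
    (k : ℕ) (z : G) (hz : z ∈ ZsubP x y) :
    itc x z (p ^ k - 1) ∈ LsubP p x y k := by
  have := isMulCommutative_ZsubP hca
  have hZx : ∀ a ∈ ZsubP x y, pc a x ∈ ZsubP x y := fun _ => pc_mem_ZsubP hca
  induction hz using Subgroup.closure_induction with
  | mem _ hg =>
    obtain ⟨m, n, hm, hn, rfl⟩ := hg
    exact itc_zz_mem_LsubP hca hm hn
  | one => simpa only [itc_one] using one_mem _
  | mul u v hu hv hu' hv' => simpa only [itc_mul_of_mem hZx hu hv] using mul_mem hu' hv'
  | inv u hu hu' => simpa only [itc_inv_of_mem hZx hu] using inv_mem hu'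

theorem lemma_Lk_odd_i (p : ℕ) (hp : p.Prime) (hodd : Odd p) (x y : G)
    (hca : ∀ z ∈ ZsubP x y, ∀ h ∈ Hsub x y, z * h = h * z)
    (hHp : ∀ h ∈ Hsub x y, h ^ p = 1)
    (k : ℕ) (hk : 1 ≤ k) (z : G) (hz : z ∈ ZsubP x y) :
    itc x z (p ^ k - 1) ∈ LsubP p x y k :=
  lemma_Lk_odd_i_general p x y hca k z hz

end Paper
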